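/- For every n ≥ 5: (a) J̃'(n−1,2) ∪ X_3^- = {e_i + e_j : 1 ≤ i < j ≤ n}, the representation J̃(n,2) of the Johnson graph J(n,2) in ℝ^n; and (b) there exists a Euclidean isometry of ℝ^n mapping J̃'(n−1,2) ∪ X_3^+ onto {e_i + e_j : 1 ≤ i < j ≤ n}, so that J̃'(n−1,2) ∪ X_3^+ is congruent to J̃(n,2). -/

import Mathlib

noncomputable section

/-- The set of distances between distinct points of `S`. -/
def distSet {n : ℕ} (S : Set (EuclideanSpace ℝ (Fin n))) : Set ℝ :=
  {d | ∃ x ∈ S, ∃ y ∈ S, x ≠ y ∧ d = dist x y}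

/-- `S` is an `s`-distance set: exactly `s` distances occur between distinct points. -/
def IsSDistanceSet {n : ℕ} (s : ℕ) (S : Set (EuclideanSpace ℝ (Fin n))) : Prop :=
  (distSet S).Finite ∧ (distSet S).ncard = s

/-- The representation `J̃'(n-1,2) = {eᵢ + eⱼ : 1 ≤ i < j ≤ n-1}` of the Johnson graph
`J(n-1,2)` inside `ℝⁿ` (0-based: indices `< n-1`, i.e. all but the last coordinate). -/
def JohnsonRep' (n : ℕ) : Set (EuclideanSpace ℝ (Fin n)) :=
  {x | ∃ i j : Fin n, (i : ℕ) < (j : ℕ) ∧ (j : ℕ) < n - 1 ∧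
    x = EuclideanSpace.single i 1 + EuclideanSpace.single j 1}

/-- The hyperplane `H = {x ∈ ℝⁿ : ∑ xᵢ = 2}`. -/
def Hyp2 (n : ℕ) : Set (EuclideanSpace ℝ (Fin n)) :=
  {x | ∑ i, x i = (2 : ℝ)}

/-- `X₃^ε` (for `ε = ±1`): the `n-1` vectors `((n±1)/(n-1), ((1±1)/(n-1))^{n-2}, ∓1)^{P'}`,
i.e. among the first `n-1` coordinates one equals `(n+ε)/(n-1)` and `n-2` equal
`(1+ε)/(n-1)`, and the last coordinate equals `-ε`. -/
def X3set (n : ℕ) (ε : ℝ) : Set (EuclideanSpace ℝ (Fin n)) :=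
  {x | {i : Fin n | (i : ℕ) < n - 1 ∧ x i = ((n : ℝ) + ε) / ((n : ℝ) - 1)}.ncard = 1 ∧
    {i : Fin n | (i : ℕ) < n - 1 ∧ x i = (1 + ε) / ((n : ℝ) - 1)}.ncard = n - 2 ∧
    (∀ i : Fin n, (i : ℕ) = n - 1 → x i = -ε)}

/-- The representation `J̃(n,2) = {eᵢ + eⱼ : 1 ≤ i < j ≤ n}` in `ℝⁿ`. -/
def J2full (n : ℕ) : Set (EuclideanSpace ℝ (Fin n)) :=
  {x | ∃ i j : Fin n, (i : ℕ) < (j : ℕ) ∧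
    x = EuclideanSpace.single i 1 + EuclideanSpace.single j 1}

/-!
Write `n = m + 1` (the last coordinate is `Fin.last m`) and `u = (1/m, …, 1/m, -1)`. The vectors
of `X₃^ε` are `eᵢ + eₙ + (1 + ε) u` (`i < n`); thus `X₃^- = {eᵢ + eₙ}` completes `J̃'(n-1,2)` to
`J̃(n,2)`, and `X₃^+ = X₃^- + 2u`. The hyperplane `⟪u, x⟫ = 2/m` has normal `u` and contains
`J̃'(n-1,2)` and the midpoints `eᵢ + eₙ + u`, so the reflection in it fixes `J̃'(n-1,2)` and maps
`X₃^+` onto `X₃^-`.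
-/

open RealInnerProductSpace

section Hyperplane

variable {E : Type*} [NormedAddCommGroup E] [InnerProductSpace ℝ E]

-- For `u = 0` this is the whole space.
def levelHyperplane (u : E) (c : ℝ) : AffineSubspace ℝ E :=
  AffineSubspace.mk' ((c / ‖u‖ ^ 2) • u) (ℝ ∙ u)ᗮ

@[simp] lemma direction_levelHyperplane (u : E) (c : ℝ) :
    (levelHyperplane u c).direction = (ℝ ∙ u)ᗮ :=
  AffineSubspace.direction_mk' _ _

instance (u : E) (c : ℝ) : (levelHyperplane u c).direction.HasOrthogonalProjection := by
  rw [direction_levelHyperplane]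
  infer_instance

instance (u : E) (c : ℝ) : Nonempty (levelHyperplane u c) := by
  unfold levelHyperplane
  infer_instance

lemma mem_levelHyperplane {u : E} (hu : u ≠ 0) {c : ℝ} {x : E} :
    x ∈ levelHyperplane u c ↔ ⟪u, x⟫ = c := by
  have hu' : ‖u‖ ^ 2 ≠ 0 := by positivity
  rw [levelHyperplane, AffineSubspace.mem_mk', vsub_eq_sub,
    Submodule.mem_orthogonal_singleton_iff_inner_right, inner_sub_right, real_inner_smul_right,
    real_inner_self_eq_norm_sq, div_mul_cancel₀ c hu', sub_eq_zero]

lemma reflection_levelHyperplane_add_smul {u : E} (hu : u ≠ 0) {c : ℝ} {x : E}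
    (hx : ⟪u, x⟫ = c) (t : ℝ) :
    EuclideanGeometry.reflection (levelHyperplane u c) (x + t • u) = x - t • u := by
  have htu : t • u ∈ (levelHyperplane u c).directionᗮ := by
    rw [direction_levelHyperplane]
    exact Submodule.le_orthogonal_orthogonal _
      (Submodule.smul_mem _ t (Submodule.mem_span_singleton_self u))
  rw [EuclideanGeometry.reflection_apply_of_mem _ _ ((mem_levelHyperplane hu).2 hx), vsub_eq_sub,
    add_sub_cancel_left, Submodule.reflection_mem_subspace_orthogonalComplement_eq_neg htu,
    vadd_eq_add, neg_add_eq_sub]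

end Hyperplane

lemma ncard_eq_one_and_ncard_eq_sub_one_iff {α β : Type*} [Finite α] [DecidableEq α]
    {p : α → Prop} {f : α → β} {a b : β} (hab : a ≠ b) :
    {k | p k ∧ f k = a}.ncard = 1 ∧ {k | p k ∧ f k = b}.ncard = {k | p k}.ncard - 1 ↔
      ∃ i, p i ∧ ∀ k, p k → f k = if k = i then a else b := by
  constructor
  · rintro ⟨ha, hb⟩
    obtain ⟨i, hi⟩ := Set.ncard_eq_one.1 ha
    obtain ⟨hpi, hfi⟩ : i ∈ {k | p k ∧ f k = a} := by rw [hi]; rfl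
    have hsub : {k | p k ∧ f k = b} ⊆ {k | p k} \ {i} := fun k hk =>
      ⟨hk.1, fun hki => hab (hfi.symm.trans ((congrArg f hki).symm.trans hk.2))⟩
    have heq := Set.eq_of_subset_of_ncard_le hsub
      (by rw [Set.ncard_sdiff_singleton_of_mem (s := {k | p k}) hpi, hb])
    refine ⟨i, hpi, fun k hk => ?_⟩
    split_ifs with hki
    · exact hki ▸ hfi
    · exact (heq.symm.subset ⟨hk, hki⟩).2
  · rintro ⟨i, hi, hf⟩
    have ha : {k | p k ∧ f k = a} = {i} := by
      ext k
      by_cases hki : k = i <;> simp_all [Ne.symm hab]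
    have hb : {k | p k ∧ f k = b} = {k | p k} \ {i} := by
      ext k
      by_cases hki : k = i <;> simp_all
    rw [ha, hb, Set.ncard_singleton, Set.ncard_sdiff_singleton_of_mem (s := {k | p k}) hi]
    exact ⟨rfl, rfl⟩

section JohnsonX3

variable {m : ℕ}

open EuclideanSpace

def x3Shift (m : ℕ) : EuclideanSpace ℝ (Fin (m + 1)) :=
  WithLp.toLp 2 fun k => if (k : ℕ) < m then (m : ℝ)⁻¹ else -1

def x3Vec (m : ℕ) (ε : ℝ) (i : Fin (m + 1)) : EuclideanSpace ℝ (Fin (m + 1)) :=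
  single i 1 + single (Fin.last m) 1 + (1 + ε) • x3Shift m

lemma x3Vec_neg_one (i : Fin (m + 1)) :
    x3Vec m (-1) i = single i 1 + single (Fin.last m) 1 := by
  simp [x3Vec]

lemma x3Vec_apply (hm : m ≠ 0) (ε : ℝ) {i : Fin (m + 1)} (hi : (i : ℕ) < m) (k : Fin (m + 1)) :
    x3Vec m ε i k = if (k : ℕ) < m then
      (if k = i then (((m + 1 : ℕ) : ℝ) + ε) / ((m + 1 : ℕ) - 1) else (1 + ε) / ((m + 1 : ℕ) - 1))
      else -ε := by
  have hlast (j : Fin (m + 1)) : (j : ℕ) < m ↔ j ≠ Fin.last m := by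
    rw [← Fin.lt_last_iff_ne_last, Fin.lt_def, Fin.val_last]
  push_cast
  rw [add_sub_cancel_right]
  by_cases hk : (k : ℕ) < m
  · rw [if_pos hk]
    split_ifs with hki
    · subst hki
      have hk' : x3Vec m ε k k = 1 + (1 + ε) * (m : ℝ)⁻¹ := by
        simp [x3Vec, x3Shift, hk, (hlast k).1 hk]
      rw [hk']
      field_simp
      ring
    · simp [x3Vec, x3Shift, hk, (hlast k).1 hk, hki, div_eq_mul_inv]
  · obtain rfl : k = Fin.last m := by simpa [hlast k] using hk
    simp [x3Vec, x3Shift, ((hlast i).1 hi).symm]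

lemma ncard_setOf_val_lt (m : ℕ) : {k : Fin (m + 1) | (k : ℕ) < m}.ncard = m := by
  have : {k : Fin (m + 1) | (k : ℕ) < m} = {Fin.last m}ᶜ := by
    ext k
    simp [← Fin.lt_last_iff_ne_last, Fin.lt_def]
  rw [this, Set.ncard_compl]
  simp

lemma X3set_succ_eq_image (hm : m ≠ 0) (ε : ℝ) :
    X3set (m + 1) ε = x3Vec m ε '' {i | (i : ℕ) < m} := by
  have hab : (((m + 1 : ℕ) : ℝ) + ε) / ((m + 1 : ℕ) - 1) ≠ (1 + ε) / ((m + 1 : ℕ) - 1) := by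
    have hm' : (0 : ℝ) < m := by exact_mod_cast Nat.pos_of_ne_zero hm
    push_cast
    rw [add_sub_cancel_right, Ne, div_left_inj' hm'.ne']
    intro h
    linarith
  ext x
  simp only [X3set, Set.mem_ofPred_eq, Set.mem_image, Nat.add_sub_cancel]
  rw [show m + 1 - 2 = {k : Fin (m + 1) | (k : ℕ) < m}.ncard - 1 by
      rw [ncard_setOf_val_lt]; omega,
    ← and_assoc, ncard_eq_one_and_ncard_eq_sub_one_iff hab]
  constructor
  · rintro ⟨⟨i, hi, hx⟩, hlast⟩
    refine ⟨i, hi, ?_⟩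
    ext k
    rw [x3Vec_apply hm ε hi]
    by_cases hk : (k : ℕ) < m
    · rw [if_pos hk, hx k hk]
    · rw [if_neg hk, hlast k (by omega)]
  · rintro ⟨i, hi, rfl⟩
    exact ⟨⟨i, hi, fun k hk => by rw [x3Vec_apply hm ε hi, if_pos hk]⟩,
      fun k hk => by rw [x3Vec_apply hm ε hi, if_neg (by omega)]⟩

lemma JohnsonRep'_union_X3set_neg_one (hm : m ≠ 0) :
    JohnsonRep' (m + 1) ∪ X3set (m + 1) (-1) = J2full (m + 1) := by
  rw [X3set_succ_eq_image hm]
  ext x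
  simp only [JohnsonRep', J2full, Set.mem_union, Set.mem_ofPred_eq, Set.mem_image, x3Vec_neg_one,
    Nat.add_sub_cancel]
  constructor
  · rintro (⟨i, j, hij, -, rfl⟩ | ⟨i, hi, rfl⟩)
    · exact ⟨i, j, hij, rfl⟩
    · exact ⟨i, Fin.last m, by simpa using hi, rfl⟩
  · rintro ⟨i, j, hij, rfl⟩
    by_cases hj : (j : ℕ) < m
    · exact Or.inl ⟨i, j, hij, hj, rfl⟩
    · obtain rfl : j = Fin.last m := Fin.ext (by rw [Fin.val_last]; omega)
      exact Or.inr ⟨i, by simpa using hij, rfl⟩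

lemma x3Shift_ne_zero (m : ℕ) : x3Shift m ≠ 0 := by
  intro h
  simpa [x3Shift] using congrArg (· (Fin.last m)) h

lemma inner_x3Shift_single (k : Fin (m + 1)) :
    ⟪x3Shift m, single k 1⟫ = if (k : ℕ) < m then (m : ℝ)⁻¹ else -1 := by
  simp [EuclideanSpace.inner_single_right, x3Shift]

lemma inner_x3Shift_self (hm : m ≠ 0) : ⟪x3Shift m, x3Shift m⟫ = (m : ℝ)⁻¹ + 1 := by
  rw [real_inner_self_eq_norm_sq, EuclideanSpace.norm_sq_eq, Fin.sum_univ_castSucc]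
  simp [x3Shift, sq, hm]

lemma reflection_of_mem_JohnsonRep' {x : EuclideanSpace ℝ (Fin (m + 1))}
    (hx : x ∈ JohnsonRep' (m + 1)) :
    EuclideanGeometry.reflection (levelHyperplane (x3Shift m) (2 / m)) x = x := by
  obtain ⟨i, j, hij, hj, rfl⟩ := hx
  rw [EuclideanGeometry.reflection_eq_self_iff, mem_levelHyperplane (x3Shift_ne_zero m),
    inner_add_right, inner_x3Shift_single, inner_x3Shift_single, if_pos (by omega), if_pos (by omega)]
  ring

lemma reflection_x3Vec_one (hm : m ≠ 0) {i : Fin (m + 1)} (hi : (i : ℕ) < m) :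
    EuclideanGeometry.reflection (levelHyperplane (x3Shift m) (2 / m)) (x3Vec m 1 i) =
      x3Vec m (-1) i := by
  have hmid : ⟪x3Shift m, x3Vec m (-1) i + x3Shift m⟫ = 2 / m := by
    rw [x3Vec_neg_one, inner_add_right, inner_add_right, inner_x3Shift_single,
      inner_x3Shift_single, inner_x3Shift_self hm, if_pos hi, if_neg (by simp)]
    ring
  rw [show x3Vec m 1 i = (x3Vec m (-1) i + x3Shift m) + (1 : ℝ) • x3Shift m by
      simp only [x3Vec]; module,
    reflection_levelHyperplane_add_smul (x3Shift_ne_zero m) hmid, one_smul, add_sub_cancel_right]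

end JohnsonX3

theorem X3_union_is_johnson (n : ℕ) (hn : 5 ≤ n) :
    JohnsonRep' n ∪ X3set n (-1) = J2full n ∧
    ∃ f : EuclideanSpace ℝ (Fin n) ≃ᵢ EuclideanSpace ℝ (Fin n),
      f '' (JohnsonRep' n ∪ X3set n 1) = J2full n := by
  obtain ⟨m, rfl⟩ : ∃ m, n = m + 1 := ⟨n - 1, by omega⟩
  have hm : m ≠ 0 := by omega
  refine ⟨JohnsonRep'_union_X3set_neg_one hm,
    (EuclideanGeometry.reflection (levelHyperplane (x3Shift m) (2 / m))).toIsometryEquiv, ?_⟩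
  rw [Set.image_union, ← JohnsonRep'_union_X3set_neg_one hm]
  congr 1
  · exact Set.EqOn.image_eq_self fun x hx => reflection_of_mem_JohnsonRep' hx
  · rw [X3set_succ_eq_image hm, X3set_succ_eq_image hm, Set.image_image]
    exact Set.image_congr fun i hi => reflection_x3Vec_one hm hi
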